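/- arXiv:1208.1139 — 3 statements merged into one kernel-verified Lean document; each statement's English description precedes it below -/
import Mathlib

section
/- Let p > 2 and let A, B ∈ ℝ with A, B > 0. Then the maximum over θ ∈ [0, 2π] of the function g(θ) = (A cos²θ + B sin²θ)/(|cos θ|^p + |sin θ|^p)^{2/p} equals (A^{p/(p-2)} + B^{p/(p-2)})^{(p-2)/p}. -/
/-!
With `u = cos² θ`, `v = sin² θ` and `s = p / 2` we have
`g(θ) = (A u + B v) / (u ^ s + v ^ s) ^ (1 / s)`, and the claimed maximum is
`(A ^ r + B ^ r) ^ (1 / r)` for the conjugate exponent `r = p / (p - 2)` of `s`.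
Hölder's inequality for two terms bounds `g` by this value, with equality when `(u, v)` is
proportional to `(A ^ (r - 1), B ^ (r - 1))`; the multiple with `u + v = 1` comes from some `θ`.
-/

open Real Set

namespace Real.HolderConjugate

variable {r s : ℝ}

theorem inner_le_Lp_mul_Lq_two_of_nonneg (hrs : r.HolderConjugate s) {a b u v : ℝ}
    (ha : 0 ≤ a) (hb : 0 ≤ b) (hu : 0 ≤ u) (hv : 0 ≤ v) :
    a * u + b * v ≤ (a ^ r + b ^ r) ^ (1 / r) * (u ^ s + v ^ s) ^ (1 / s) := by
  simpa [Fin.sum_univ_two] using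
    inner_le_Lp_mul_Lq_of_nonneg Finset.univ hrs (f := ![a, b]) (g := ![u, v])
      (by simp [Fin.forall_fin_two, ha, hb]) (by simp [Fin.forall_fin_two, hu, hv])

theorem div_rpow_add_rpow_le (hrs : r.HolderConjugate s) {a b u v : ℝ} (ha : 0 ≤ a) (hb : 0 ≤ b)
    (hu : 0 ≤ u) (hv : 0 ≤ v) :
    (a * u + b * v) / (u ^ s + v ^ s) ^ (1 / s) ≤ (a ^ r + b ^ r) ^ (1 / r) :=
  div_le_of_le_mul₀ (by positivity) (by positivity)
    (hrs.inner_le_Lp_mul_Lq_two_of_nonneg ha hb hu hv)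

theorem div_rpow_add_rpow_eq_of_proportional (hrs : r.HolderConjugate s) {a b c : ℝ}
    (ha : 0 < a) (hb : 0 < b) (hc : 0 < c) :
    (a * (c * a ^ (r - 1)) + b * (c * b ^ (r - 1))) /
        ((c * a ^ (r - 1)) ^ s + (c * b ^ (r - 1)) ^ s) ^ (1 / s) =
      (a ^ r + b ^ r) ^ (1 / r) := by
  have hpow {x : ℝ} (hx : 0 < x) : x * x ^ (r - 1) = x ^ r := by
    rw [← rpow_one_add' hx.le (by linarith [hrs.sub_one_pos]), add_sub_cancel]
  have hpow_conj {x : ℝ} (hx : 0 < x) : (c * x ^ (r - 1)) ^ s = c ^ s * x ^ r := by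
    rw [mul_rpow hc.le (by positivity), ← rpow_mul hx.le, hrs.sub_one_mul_conj]
  have hT : 0 < a ^ r + b ^ r := by positivity
  have hnum : a * (c * a ^ (r - 1)) + b * (c * b ^ (r - 1)) = c * (a ^ r + b ^ r) := by
    rw [← hpow ha, ← hpow hb]; ring
  have hden : ((c * a ^ (r - 1)) ^ s + (c * b ^ (r - 1)) ^ s) ^ (1 / s) =
      c * (a ^ r + b ^ r) ^ (1 / s) := by
    rw [hpow_conj ha, hpow_conj hb, ← mul_add, mul_rpow (by positivity) hT.le, ← rpow_mul hc.le,
      mul_one_div_cancel hrs.symm.ne_zero, rpow_one]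
  rw [hnum, hden, mul_div_mul_left _ _ hc.ne', div_eq_iff (by positivity), ← rpow_add hT,
    hrs.one_div_add_one_div, div_one, rpow_one]

end Real.HolderConjugate

theorem abs_rpow_eq_sq_rpow_half (x p : ℝ) : |x| ^ p = (x ^ 2) ^ (p / 2) := by
  rw [← sq_abs, ← rpow_natCast, ← rpow_mul (abs_nonneg x)]
  congr 1
  ring

theorem exists_mem_Icc_cos_sq_eq {x : ℝ} (hx₀ : 0 ≤ x) (hx₁ : x ≤ 1) :
    ∃ θ ∈ Icc 0 π, cos θ ^ 2 = x ∧ sin θ ^ 2 = 1 - x := by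
  refine ⟨arccos √x, ⟨arccos_nonneg _, arccos_le_pi _⟩, ?_, ?_⟩
  · rw [cos_arccos (by linarith [sqrt_nonneg x]) (sqrt_le_one.mpr hx₁), sq_sqrt hx₀]
  · rw [sin_arccos, sq_sqrt hx₀, sq_sqrt (by linarith)]

/-- For `p > 2` and `A, B > 0`, the maximum over `θ ∈ [0, 2π]` of
`g(θ) = (A cos²θ + B sin²θ)/(|cos θ|^p + |sin θ|^p)^{2/p}` equals
`(A^{p/(p-2)} + B^{p/(p-2)})^{(p-2)/p}`. -/
theorem stmt1 (p A B : ℝ) (hp : 2 < p) (hA : 0 < A) (hB : 0 < B) :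
    IsGreatest
      ((fun θ : ℝ =>
          (A * Real.cos θ ^ 2 + B * Real.sin θ ^ 2) /
            (|Real.cos θ| ^ p + |Real.sin θ| ^ p) ^ (2 / p)) '' Set.Icc 0 (2 * π))
      ((A ^ (p / (p - 2)) + B ^ (p / (p - 2))) ^ ((p - 2) / p)) := by
  have hrs : (p / (p - 2)).HolderConjugate (p / 2) := by
    convert (HolderConjugate.conjExponent (by linarith : 1 < p / 2)).symm using 1
    rw [conjExponent]
    field_simp
  set r := p / (p - 2)
  have hg (θ : ℝ) : (|cos θ| ^ p + |sin θ| ^ p) ^ (2 / p) =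
      ((cos θ ^ 2) ^ (p / 2) + (sin θ ^ 2) ^ (p / 2)) ^ (1 / (p / 2)) := by
    rw [abs_rpow_eq_sq_rpow_half, abs_rpow_eq_sq_rpow_half, one_div_div]
  rw [show (p - 2) / p = 1 / r by rw [one_div_div]]
  simp only [hg]
  refine ⟨?_, ?_⟩
  · set c := (A ^ (r - 1) + B ^ (r - 1))⁻¹
    have hc : 0 < c := by positivity
    have hsum : c * A ^ (r - 1) + c * B ^ (r - 1) = 1 := by
      rw [← mul_add, inv_mul_cancel₀ (by positivity)]
    obtain ⟨θ, hθ, hcos, hsin⟩ :=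
      exists_mem_Icc_cos_sq_eq (x := c * A ^ (r - 1)) (by positivity)
        (by linarith [mul_pos hc (rpow_pos_of_pos hB (r - 1))])
    refine ⟨θ, Icc_subset_Icc_right (by linarith [pi_pos]) hθ, ?_⟩
    rw [← eq_sub_of_add_eq' hsum] at hsin
    simp only [hcos, hsin]
    exact hrs.div_rpow_add_rpow_eq_of_proportional hA hB hc
  · rintro _ ⟨θ, -, rfl⟩
    exact hrs.div_rpow_add_rpow_le hA.le hB.le (sq_nonneg _) (sq_nonneg _)
end

section
/- Let p > 2. Then for all a, b ∈ ℝ: |a + b|^p ≥ |a|^p + |b|^p - p |a|^{p-1} |b| - p |a| |b|^{p-1}. -/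
open Real

lemma aux_mvt {p u v : ℝ} (hp : 1 ≤ p) (hu : 0 ≤ u) (huv : u ≤ v) :
    v ^ p - u ^ p ≤ p * v ^ (p - 1) * (v - u) := by
  rcases eq_or_lt_of_le huv with rfl | hlt
  · simp
  have hdiff : ∀ x : ℝ, HasDerivAt (fun x : ℝ => x ^ p) (p * x ^ (p - 1)) x :=
    fun x => Real.hasDerivAt_rpow_const (Or.inr hp)
  obtain ⟨c, hc, hceq⟩ := exists_hasDerivAt_eq_slope (fun x : ℝ => x ^ p)
    (fun x => p * x ^ (p - 1)) hlt
    (fun x _ => (hdiff x).continuousAt.continuousWithinAt)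
    (fun x _ => hdiff x)
  have hc0 : 0 ≤ c := le_of_lt (lt_of_le_of_lt hu hc.1)
  have hcv : c ≤ v := le_of_lt hc.2
  have h1 : c ^ (p - 1) ≤ v ^ (p - 1) :=
    Real.rpow_le_rpow hc0 hcv (by linarith)
  have h2 : v ^ p - u ^ p = p * c ^ (p - 1) * (v - u) := by
    rw [hceq, div_mul_cancel₀ _ (sub_ne_zero.2 hlt.ne')]
  rw [h2]
  have hp0 : (0 : ℝ) ≤ p := by linarith
  have hvu : (0:ℝ) ≤ v - u := by linarith
  exact mul_le_mul_of_nonneg_right (mul_le_mul_of_nonneg_left h1 hp0) hvu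

lemma key {p x y z : ℝ} (hp : 2 < p) (hy : 0 ≤ y) (hxy : y ≤ x) (hz : 0 ≤ z)
    (hxz : x - y ≤ z) :
    x ^ p + y ^ p - p * x ^ (p - 1) * y - p * x * y ^ (p - 1) ≤ z ^ p := by
  have hx : 0 ≤ x := le_trans hy hxy
  have h1 : x ^ p - (x - y) ^ p ≤ p * x ^ (p - 1) * y := by
    have := aux_mvt (p := p) (u := x - y) (v := x) (by linarith) (by linarith) (by linarith)
    simpa using this
  have h2 : (x - y) ^ p ≤ z ^ p := Real.rpow_le_rpow (by linarith) hxz (by linarith)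
  have h3 : y ^ p ≤ p * x * y ^ (p - 1) := by
    have : y ^ p = y * y ^ (p - 1) := by
      rw [← Real.rpow_one_add' hy (by linarith)]
      ring_nf
    rw [this]
    have hy' : y ≤ p * x := by nlinarith
    have := Real.rpow_nonneg hy (p - 1)
    nlinarith
  linarith

/-- the elementary pointwise inequality
`|a + b|^p ≥ |a|^p + |b|^p - p |a|^{p-1} |b| - p |a| |b|^{p-1}` for `p > 2`. -/
theorem stmt13 (p : ℝ) (hp : 2 < p) (a b : ℝ) :
    |a| ^ p + |b| ^ p - p * |a| ^ (p - 1) * |b| - p * |a| * |b| ^ (p - 1) ≤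
      |a + b| ^ p := by
  rcases le_total |b| |a| with h | h
  · have habs : |a| - |b| ≤ |a + b| := by
      have := abs_sub_abs_le_abs_sub a (-b)
      simpa [sub_neg_eq_add] using this
    exact key hp (abs_nonneg b) h (abs_nonneg _) habs
  · have habs : |b| - |a| ≤ |a + b| := by
      have := abs_sub_abs_le_abs_sub b (-a)
      simpa [sub_neg_eq_add, add_comm] using this
    have := key hp (abs_nonneg a) h (abs_nonneg _) habs
    linarith
end

section
/- Let V ∈ L^∞(ℝ^N) with V(x) → V^∞ > 0, p ∈ (2, 2*), λ₁ = inf_M J, and suppose λ₁ ≤ 0 is attained at some w₁ > 0 solving -Δw₁ + V w₁ = λ₁ w₁^{p-1}. If u ∈ M solves -Δu + V u = λ|u|^{p-2}u with λ > 0 ≥ λ₁ or λ ≥ 0 > λ₁, then u is nodal (both u⁺ ≠ 0 and u⁻ ≠ 0). -/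
open MeasureTheory Real Filter
open scoped RealInnerProductSpace

noncomputable section

variable {N : ℕ}

/-- The energy functional `J(u) = ∫ |∇u|² + V u²`. -/
def Jfun (V : EuclideanSpace ℝ (Fin N) → ℝ) (u : EuclideanSpace ℝ (Fin N) → ℝ) : ℝ :=
  ∫ x, (‖fderiv ℝ u x‖ ^ 2 + V x * u x ^ 2)

/-- Membership in `H¹(ℝ^N)`. -/
def H1mem (u : EuclideanSpace ℝ (Fin N) → ℝ) : Prop :=
  MemLp u 2 volume ∧ MemLp (fun x => ‖fderiv ℝ u x‖) 2 volume

/-- The constraint manifold `M = {u ∈ H¹ : ∫ |u|^p = 1}`. -/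
def Mset (N : ℕ) (p : ℝ) : Set (EuclideanSpace ℝ (Fin N) → ℝ) :=
  {u | H1mem u ∧ (∫ x, |u x| ^ p) = 1}

/-- The square of the `H¹`-distance between two functions. -/
def H1dist (u v : EuclideanSpace ℝ (Fin N) → ℝ) : ℝ :=
  ∫ x, (‖fderiv ℝ u x - fderiv ℝ v x‖ ^ 2 + (u x - v x) ^ 2)

/-- The first minimax level `λ₁ = inf_M J`. -/
def lam1 (N : ℕ) (p : ℝ) (V : EuclideanSpace ℝ (Fin N) → ℝ) : ℝ :=
  sInf (Jfun V '' Mset N p)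

/-- The class `Γ₂` of odd `H¹`-continuous maps from `S¹` to `M`
(parametrized by `θ ∈ ℝ`; oddness is antiperiodicity by `π`). -/
def Gamma2 (N : ℕ) (p : ℝ) : Set (ℝ → EuclideanSpace ℝ (Fin N) → ℝ) :=
  {γ | (∀ θ, γ θ ∈ Mset N p) ∧ (∀ θ, γ (θ + π) = -γ θ) ∧
    ∀ θ₀ : ℝ, Tendsto (fun θ => H1dist (γ θ) (γ θ₀)) (nhds θ₀) (nhds 0)}

/-- The second minimax level `λ₂ = inf_{γ ∈ Γ₂} max_{u ∈ γ(S¹)} J(u)`. -/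
def lam2 (N : ℕ) (p : ℝ) (V : EuclideanSpace ℝ (Fin N) → ℝ) : ℝ :=
  sInf {c | ∃ γ ∈ Gamma2 N p,
    c = sSup ((fun θ => Jfun V (γ θ)) '' Set.Icc 0 (2 * π))}

/-- `p` is an admissible (subcritical) exponent: `p ∈ (2, 2*)`. -/
def pAdm (N : ℕ) (p : ℝ) : Prop :=
  2 < p ∧ ((N : ℝ) = 2 ∨ (3 ≤ N ∧ p < 2 * N / ((N : ℝ) - 2)))

/-- `u` is a weak solution of `-Δu + V u = λ |u|^{p-2} u`. -/
def WeakSol (V : EuclideanSpace ℝ (Fin N) → ℝ) (lam p : ℝ)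
    (u : EuclideanSpace ℝ (Fin N) → ℝ) : Prop :=
  ∀ φ : EuclideanSpace ℝ (Fin N) → ℝ, H1mem φ →
    (∫ x, (⟪gradient u x, gradient φ x⟫ + V x * u x * φ x)) =
      lam * ∫ x, |u x| ^ (p - 2) * u x * φ x

/-!
Testing the equation of `u` against the ground state `w₁` and the equation of `w₁` against `u`
gives `λ ∫ |u|^{p-2} u w₁ = λ₁ ∫ w₁^{p-1} u`, since the left-hand sides of both weak formulations
are the same symmetric bilinear form. If `u` did not change sign, the two integrals would be
nonzero and of the same sign (as `w₁ > 0` and `u ≠ 0`), which the sign condition on `λ` and `λ₁`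
rules out.
-/

section SignDefinite

variable {α : Type*} [MeasurableSpace α] {μ : Measure α}

theorem integral_mul_pos_of_nonneg {c f : α → ℝ} (hc : ∀ x, f x ≠ 0 → 0 < c x) (hf : 0 ≤ f)
    (hint : Integrable (fun x => c x * f x) μ) (hne : ¬ f =ᵐ[μ] 0) :
    0 < ∫ x, c x * f x ∂μ := by
  have hcf : 0 ≤ fun x => c x * f x := fun x => by
    rcases eq_or_ne (f x) 0 with h | h
    · simp [h]
    · exact mul_nonneg (hc x h).le (hf x)
  refine (integral_nonneg hcf).lt_of_ne fun h0 => hne ?_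
  filter_upwards [(integral_eq_zero_iff_of_nonneg hcf hint).1 h0.symm] with x hx
  by_contra hfx
  exact mul_ne_zero (hc x hfx).ne' hfx hx

theorem integral_mul_neg_of_nonpos {c f : α → ℝ} (hc : ∀ x, f x ≠ 0 → 0 < c x) (hf : f ≤ 0)
    (hint : Integrable (fun x => c x * f x) μ) (hne : ¬ f =ᵐ[μ] 0) :
    ∫ x, c x * f x ∂μ < 0 := by
  have hpos := integral_mul_pos_of_nonneg (μ := μ) (f := -f) (fun x hx => hc x (by simpa using hx))
    (neg_nonneg.2 hf) (by simpa using hint.neg)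
    (fun h => hne (h.mono fun x hx => by simpa using hx))
  simpa [integral_neg] using hpos

theorem integral_mul_mul_integral_mul_pos {c₁ c₂ f : α → ℝ} (hc₁ : ∀ x, f x ≠ 0 → 0 < c₁ x)
    (hc₂ : ∀ x, f x ≠ 0 → 0 < c₂ x) (hf : 0 ≤ f ∨ f ≤ 0)
    (hint₁ : Integrable (fun x => c₁ x * f x) μ) (hint₂ : Integrable (fun x => c₂ x * f x) μ)
    (hne : ¬ f =ᵐ[μ] 0) :
    0 < (∫ x, c₁ x * f x ∂μ) * ∫ x, c₂ x * f x ∂μ := by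
  rcases hf with hf | hf
  · exact mul_pos (integral_mul_pos_of_nonneg hc₁ hf hint₁ hne)
      (integral_mul_pos_of_nonneg hc₂ hf hint₂ hne)
  · exact mul_pos_of_neg_of_neg (integral_mul_neg_of_nonpos hc₁ hf hint₁ hne)
      (integral_mul_neg_of_nonpos hc₂ hf hint₂ hne)

end SignDefinite

section Pairing

variable {α : Type*} [MeasurableSpace α] {μ : Measure α} {p : ℝ}

theorem rpow_sub_two_mul_self_mul_le (hp : 2 < p) {a b : ℝ} (ha : 0 ≤ a) (hb : 0 ≤ b) :
    a ^ (p - 2) * a * b ≤ a ^ p + b ^ p := by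
  have hm : 0 ≤ max a b := le_max_of_le_left ha
  have hp2 : 0 ≤ p - 2 := by linarith
  calc a ^ (p - 2) * a * b ≤ max a b ^ (p - 2) * max a b * max a b := by
        gcongr
        exacts [le_max_left a b, le_max_left a b, le_max_right a b]
    _ = max a b ^ p := by
        rw [mul_assoc, ← sq, ← Real.rpow_natCast, ← Real.rpow_add' hm (by linarith)]
        norm_num
    _ ≤ a ^ p + b ^ p := by
        rcases max_cases a b with ⟨h, _⟩ | ⟨h, _⟩ <;> rw [h] <;>
          linarith [Real.rpow_nonneg ha p, Real.rpow_nonneg hb p]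

theorem integrable_abs_rpow_sub_two_mul_mul (hp : 2 < p) {u w : α → ℝ}
    (hu : AEStronglyMeasurable u μ) (hw : AEStronglyMeasurable w μ)
    (hup : Integrable (fun x => |u x| ^ p) μ) (hwp : Integrable (fun x => |w x| ^ p) μ) :
    Integrable (fun x => |u x| ^ (p - 2) * u x * w x) μ := by
  have hcont : Continuous fun t : ℝ => |t| ^ (p - 2) * t :=
    ((Real.continuous_rpow_const (by linarith)).comp continuous_abs).mul continuous_id
  refine (hup.add hwp).mono' ((hcont.comp_aestronglyMeasurable hu).mul hw)
    (.of_forall fun x => ?_)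
  rw [Real.norm_eq_abs, abs_mul, abs_mul, abs_of_nonneg (by positivity)]
  exact rpow_sub_two_mul_self_mul_le hp (abs_nonneg _) (abs_nonneg _)

theorem mul_integral_abs_rpow_sub_two_mul_mul_pos {u w : α → ℝ} (hw : ∀ x, 0 < w x)
    (hu : 0 ≤ u ∨ u ≤ 0) (hne : ¬ u =ᵐ[μ] 0)
    (huw : Integrable (fun x => |u x| ^ (p - 2) * u x * w x) μ)
    (hwu : Integrable (fun x => |w x| ^ (p - 2) * w x * u x) μ) :
    0 < (∫ x, |u x| ^ (p - 2) * u x * w x ∂μ) * ∫ x, |w x| ^ (p - 2) * w x * u x ∂μ := by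
  have hshape : (fun x => |u x| ^ (p - 2) * u x * w x) =
      fun x => |u x| ^ (p - 2) * w x * u x := funext fun x => by ring
  rw [hshape] at huw ⊢
  exact integral_mul_mul_integral_mul_pos
    (fun x hx => mul_pos (Real.rpow_pos_of_pos (abs_pos.2 hx) _) (hw x))
    (fun x _ => mul_pos (Real.rpow_pos_of_pos (abs_pos.2 (hw x).ne') _) (hw x)) hu huw hwu hne

end Pairing

theorem Mset.integrable_abs_rpow {p : ℝ} {u : EuclideanSpace ℝ (Fin N) → ℝ}
    (hu : u ∈ Mset N p) : Integrable (fun x => |u x| ^ p) :=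
  Integrable.of_integral_ne_zero (by rw [hu.2]; exact one_ne_zero)

theorem Mset.not_ae_eq_zero {p : ℝ} (hp : p ≠ 0) {u : EuclideanSpace ℝ (Fin N) → ℝ}
    (hu : u ∈ Mset N p) : ¬ u =ᵐ[volume] 0 := fun h => by
  have hzero : (fun x => |u x| ^ p) =ᵐ[volume] 0 :=
    h.mono fun x hx => by simp [show u x = 0 from hx, Real.zero_rpow hp]
  simpa [integral_congr_ae hzero] using hu.2

theorem WeakSol.mul_integral_eq_mul_integral {V : EuclideanSpace ℝ (Fin N) → ℝ} {lam mu p : ℝ}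
    {u w : EuclideanSpace ℝ (Fin N) → ℝ} (hu : WeakSol V lam p u) (hw : WeakSol V mu p w)
    (hu₁ : H1mem u) (hw₁ : H1mem w) :
    lam * ∫ x, |u x| ^ (p - 2) * u x * w x = mu * ∫ x, |w x| ^ (p - 2) * w x * u x := by
  rw [← hu w hw₁, ← hw u hu₁]
  congr 1
  funext x
  rw [real_inner_comm]
  ring

theorem stmt17_general (N : ℕ) (p lam : ℝ) (hp : pAdm N p)
    (V : EuclideanSpace ℝ (Fin N) → ℝ)
    (w₁ : EuclideanSpace ℝ (Fin N) → ℝ) (hw₁M : w₁ ∈ Mset N p)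
    (hw₁pos : ∀ x, 0 < w₁ x)
    (hw₁sol : WeakSol V (lam1 N p V) p w₁)
    (u : EuclideanSpace ℝ (Fin N) → ℝ) (huM : u ∈ Mset N p)
    (husol : WeakSol V lam p u)
    (hsign : (0 < lam ∧ lam1 N p V ≤ 0) ∨ (0 ≤ lam ∧ lam1 N p V < 0)) :
    (∃ x, 0 < u x) ∧ (∃ x, u x < 0) := by
  have hp2 : 2 < p := hp.1
  by_contra hnodal
  have hdef : 0 ≤ u ∨ u ≤ 0 := by
    rcases not_and_or.1 hnodal with h | h
    · exact .inr fun x => not_lt.1 fun hx => h ⟨x, hx⟩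
    · exact .inl fun x => not_lt.1 fun hx => h ⟨x, hx⟩
  have hpair := husol.mul_integral_eq_mul_integral hw₁sol huM.1 hw₁M.1
  have hsame := mul_integral_abs_rpow_sub_two_mul_mul_pos hw₁pos hdef
    (Mset.not_ae_eq_zero (by linarith) huM)
    (integrable_abs_rpow_sub_two_mul_mul hp2 huM.1.1.1 hw₁M.1.1.1
      (Mset.integrable_abs_rpow huM) (Mset.integrable_abs_rpow hw₁M))
    (integrable_abs_rpow_sub_two_mul_mul hp2 hw₁M.1.1.1 huM.1.1.1
      (Mset.integrable_abs_rpow hw₁M) (Mset.integrable_abs_rpow huM))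
  set A := ∫ x, |u x| ^ (p - 2) * u x * w₁ x
  set B := ∫ x, |w₁ x| ^ (p - 2) * w₁ x * u x
  have hsquare : lam * (A * A) = lam1 N p V * (A * B) := by linear_combination A * hpair
  rcases hsign with ⟨hl, hl₁⟩ | ⟨hl, hl₁⟩
  · nlinarith [mul_pos hl (mul_self_pos.2 (left_ne_zero_of_mul hsame.ne'))]
  · nlinarith [mul_nonneg hl (mul_self_nonneg A)]

/-- if `λ₁ ≤ 0` is attained at a positive ground state `w₁` and
`u ∈ M` solves the equation with `λ > 0 ≥ λ₁` or `λ ≥ 0 > λ₁`, then `u` is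
nodal. -/
theorem stmt17 (N : ℕ) (hN : 2 ≤ N) (p Vinf lam : ℝ) (hp : pAdm N p) (hVinf : 0 < Vinf)
    (V : EuclideanSpace ℝ (Fin N) → ℝ) (hV : MemLp V ⊤ volume)
    (hVlim : Tendsto V (Filter.cocompact _) (nhds Vinf))
    (w₁ : EuclideanSpace ℝ (Fin N) → ℝ) (hw₁M : w₁ ∈ Mset N p)
    (hw₁pos : ∀ x, 0 < w₁ x)
    (hw₁min : Jfun V w₁ = lam1 N p V)
    (hw₁sol : WeakSol V (lam1 N p V) p w₁)
    (u : EuclideanSpace ℝ (Fin N) → ℝ) (huM : u ∈ Mset N p)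
    (husol : WeakSol V lam p u)
    (hsign : (0 < lam ∧ lam1 N p V ≤ 0) ∨ (0 ≤ lam ∧ lam1 N p V < 0)) :
    (∃ x, 0 < u x) ∧ (∃ x, u x < 0) :=
  stmt17_general N p lam hp V w₁ hw₁M hw₁pos hw₁sol u huM husol hsign
end
end
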